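/- Fix integers k and l with 1 ≤ l ≤ τ̄. Let (T_n)_{k−τ̄ ≤ n ≤ k+l} be random variables each with PMF p on 𝒟 and (U_n)_{k−τ̄ ≤ n ≤ k+l} square-integrable real random variables, such that for each n, T_n is independent of the σ-algebra generated by {T_{n'} : n' < n} ∪ {U_{n'} : n' ≤ n}. Set d₁ = Σ_{i=0}^{τ̄} ω_i(T_{k−i}) U_{k−i} and d₂ = Σ_{j=0}^{τ̄} ω_j(T_{k+l−j}) U_{k+l−j}. Then E[d₁ d₂] = −Σ_{i=0}^{τ̄−l} α_i α_{i+l} p_i p_{i+l} E[U_{k−i}²]. (Equation (30) of the paper: the lag-l correlation of the uncertainty output d.) -/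

import Mathlib

open MeasureTheory ProbabilityTheory Finset


lemma aux_ind_eq {Ω : Type*} (T' : Ω → ℕ) (j : ℕ) :
    (fun x => if T' x = j then (1:ℝ) else 0) = Set.indicator {x | T' x = j} (fun _ => 1) :=
  funext fun x => by by_cases h : T' x = j <;> simp [Set.indicator_apply, h]

lemma aux_ind_meas {Ω : Type*} {mΩ : MeasurableSpace Ω} {T' : Ω → ℕ} (hm : Measurable T')
    (j : ℕ) : Measurable (fun x => if T' x = j then (1:ℝ) else 0) := by
  rw [aux_ind_eq]
  exact measurable_const.indicator (hm (measurableSet_singleton j))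

lemma aux_omega_meas {Ω : Type*} {mΩ : MeasurableSpace Ω} {T' : Ω → ℕ} (hm : Measurable T')
    (j : ℕ) (a b : ℝ) :
    Measurable (fun x => a * ((if T' x = j then (1:ℝ) else 0) - b)) :=
  ((aux_ind_meas hm j).sub measurable_const).const_mul a

lemma aux_ind_integrable {Ω : Type*} [MeasurableSpace Ω] (μ : Measure Ω) [IsFiniteMeasure μ]
    (T' : Ω → ℕ) (hm : Measurable T') (j : ℕ) :
    Integrable (fun x => if T' x = j then (1:ℝ) else 0) μ := by
  rw [aux_ind_eq]
  exact (integrable_const 1).indicator (hm (measurableSet_singleton j))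

lemma aux_ind_integral {Ω : Type*} [MeasurableSpace Ω] (μ : Measure Ω) [IsProbabilityMeasure μ]
    (T' : Ω → ℕ) (hm : Measurable T') (j : ℕ) (pj : ℝ) (hpj : 0 ≤ pj)
    (hpmf : μ {x | T' x = j} = ENNReal.ofReal pj) :
    ∫ x, (if T' x = j then (1:ℝ) else 0) ∂μ = pj := by
  rw [aux_ind_eq]
  have hset : {x | T' x = j} = T' ⁻¹' {j} := rfl
  have h1 : ∫ x, (T' ⁻¹' {j}).indicator (fun _ => (1:ℝ)) x ∂μ = (μ (T' ⁻¹' {j})).toReal :=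
    MeasureTheory.integral_indicator_one (hm (measurableSet_singleton j))
  rw [hset, h1, ← hset, hpmf, ENNReal.toReal_ofReal hpj]

lemma aux_omega_integral {Ω : Type*} [MeasurableSpace Ω] (μ : Measure Ω) [IsProbabilityMeasure μ]
    (T' : Ω → ℕ) (hm : Measurable T') (j : ℕ) (aj pj : ℝ) (hpj : 0 ≤ pj)
    (hpmf : μ {x | T' x = j} = ENNReal.ofReal pj) :
    ∫ x, aj * ((if T' x = j then (1:ℝ) else 0) - pj) ∂μ = 0 := by
  rw [integral_const_mul, integral_sub (aux_ind_integrable μ T' hm j) (integrable_const pj),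
    aux_ind_integral μ T' hm j pj hpj hpmf, integral_const]
  simp

lemma aux_indep_mul {Ω : Type*} {m₂ : MeasurableSpace Ω} [MeasurableSpace Ω] {μ : Measure Ω}
    [IsProbabilityMeasure μ] (T' : Ω → ℕ) (h : ℕ → ℝ) (f Y : Ω → ℝ)
    (hf : f = fun x => h (T' x))
    (hind : Indep (MeasurableSpace.comap T' ⊤) m₂ μ)
    (hY : Measurable[m₂] Y)
    (hTm : AEStronglyMeasurable f μ)
    (hYm : AEStronglyMeasurable Y μ) :
    ∫ x, f x * Y x ∂μ = (∫ x, f x ∂μ) * ∫ x, Y x ∂μ := by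
  subst hf
  have hif : IndepFun (fun x => h (T' x)) Y μ := by
    rw [IndepFun_iff_Indep]
    refine indep_of_indep_of_le_right (indep_of_indep_of_le_left hind ?_) ?_
    · have heq : (fun x => h (T' x)) = h ∘ T' := rfl
      rw [heq, ← MeasurableSpace.comap_comp]
      exact MeasurableSpace.comap_mono le_top
    · exact measurable_iff_comap_le.mp hY
  exact hif.integral_fun_mul_eq_mul_integral hTm hYm

lemma aux_cross {Ω : Type*} {m₂ : MeasurableSpace Ω} [MeasurableSpace Ω] (μ : Measure Ω)
    [IsProbabilityMeasure μ] (T' : Ω → ℕ) (Y : Ω → ℝ) (j : ℕ) (aj pj : ℝ) (hpj : 0 ≤ pj)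
    (hTm : Measurable T')
    (hpmf : μ {x | T' x = j} = ENNReal.ofReal pj)
    (hind : Indep (MeasurableSpace.comap T' ⊤) m₂ μ)
    (hY : Measurable[m₂] Y) (hYm : AEStronglyMeasurable Y μ) :
    ∫ x, aj * ((if T' x = j then (1:ℝ) else 0) - pj) * Y x ∂μ = 0 := by
  calc ∫ x, aj * ((if T' x = j then (1:ℝ) else 0) - pj) * Y x ∂μ
      = (∫ x, aj * ((if T' x = j then (1:ℝ) else 0) - pj) ∂μ) * ∫ x, Y x ∂μ :=
        aux_indep_mul T' (fun t => aj * ((if t = j then (1:ℝ) else 0) - pj))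
          (fun x => aj * ((if T' x = j then (1:ℝ) else 0) - pj)) Y rfl hind hY
          (aux_omega_meas hTm j aj pj).aestronglyMeasurable hYm
    _ = 0 := by rw [aux_omega_integral μ T' hTm j aj pj hpj hpmf, zero_mul]

lemma aux_diag {Ω : Type*} {m₂ : MeasurableSpace Ω} [MeasurableSpace Ω] (μ : Measure Ω)
    [IsProbabilityMeasure μ] (T' : Ω → ℕ) (V : Ω → ℝ) (i j : ℕ) (ai aj pi pj : ℝ)
    (hij : i ≠ j) (hpi : 0 ≤ pi) (hpj : 0 ≤ pj)
    (hTm : Measurable T')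
    (hpmfi : μ {x | T' x = i} = ENNReal.ofReal pi)
    (hpmfj : μ {x | T' x = j} = ENNReal.ofReal pj)
    (hind : Indep (MeasurableSpace.comap T' ⊤) m₂ μ)
    (hVm2 : Measurable[m₂] V) (hVamb : Measurable V) :
    ∫ x, (ai * ((if T' x = i then (1:ℝ) else 0) - pi) * V x) *
        (aj * ((if T' x = j then (1:ℝ) else 0) - pj) * V x) ∂μ
      = -(ai * aj * pi * pj * ∫ x, (V x)^2 ∂μ) := by
  have hpt : ∀ x, (ai * ((if T' x = i then (1:ℝ) else 0) - pi)) *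
      (aj * ((if T' x = j then (1:ℝ) else 0) - pj)) =
      ai * aj * pi * pj - (ai * aj * pj) * (if T' x = i then (1:ℝ) else 0)
        - (ai * aj * pi) * (if T' x = j then (1:ℝ) else 0) := by
    intro x
    by_cases h1 : T' x = i
    · have h2 : ¬ (T' x = j) := fun h => hij (h1.symm.trans h)
      simp only [if_pos h1, if_neg h2]; ring
    · by_cases h2 : T' x = j
      · simp only [if_pos h2, if_neg h1]; ring
      · simp only [if_neg h1, if_neg h2]; ring
  have hmean : ∫ x, (ai * ((if T' x = i then (1:ℝ) else 0) - pi)) *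
      (aj * ((if T' x = j then (1:ℝ) else 0) - pj)) ∂μ = -(ai * aj * pi * pj) := by
    simp only [hpt]
    have hI1 : Integrable (fun x => ai * aj * pi * pj
        - ai * aj * pj * (if T' x = i then (1:ℝ) else 0)) μ :=
      (integrable_const _).sub ((aux_ind_integrable μ T' hTm i).const_mul _)
    have hI2 : Integrable (fun x => ai * aj * pi * (if T' x = j then (1:ℝ) else 0)) μ :=
      (aux_ind_integrable μ T' hTm j).const_mul _
    have hI3 : Integrable (fun x => ai * aj * pj * (if T' x = i then (1:ℝ) else 0)) μ :=
      (aux_ind_integrable μ T' hTm i).const_mul _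
    rw [integral_sub hI1 hI2,
      integral_sub (integrable_const _) hI3,
      integral_const, integral_const_mul, integral_const_mul,
      aux_ind_integral μ T' hTm i pi hpi hpmfi, aux_ind_integral μ T' hTm j pj hpj hpmfj]
    simp only [measure_univ, probReal_univ, ENNReal.toReal_one, smul_eq_mul, one_mul]
    ring
  calc ∫ x, (ai * ((if T' x = i then (1:ℝ) else 0) - pi) * V x) *
        (aj * ((if T' x = j then (1:ℝ) else 0) - pj) * V x) ∂μ
      = ∫ x, (ai * ((if T' x = i then (1:ℝ) else 0) - pi)) *
          (aj * ((if T' x = j then (1:ℝ) else 0) - pj)) * (V x)^2 ∂μ :=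
        integral_congr_ae (Filter.Eventually.of_forall fun x => by ring)
    _ = (∫ x, (ai * ((if T' x = i then (1:ℝ) else 0) - pi)) *
          (aj * ((if T' x = j then (1:ℝ) else 0) - pj)) ∂μ) * ∫ x, (V x)^2 ∂μ :=
        aux_indep_mul T'
          (fun t => (ai * ((if t = i then (1:ℝ) else 0) - pi)) *
            (aj * ((if t = j then (1:ℝ) else 0) - pj)))
          (fun x => (ai * ((if T' x = i then (1:ℝ) else 0) - pi)) *
            (aj * ((if T' x = j then (1:ℝ) else 0) - pj)))
          (fun x => (V x)^2) rfl hind (hVm2.pow_const 2)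
          ((aux_omega_meas hTm i ai pi).mul (aux_omega_meas hTm j aj pj)).aestronglyMeasurable
          (hVamb.pow_const 2).aestronglyMeasurable
    _ = -(ai * aj * pi * pj * ∫ x, (V x)^2 ∂μ) := by rw [hmean]; ring
/-- Equation (30): lag-`l` correlation (`1 ≤ l ≤ τ̄`) of the channel-uncertainty output
`d(k) = ∑_i ω_i(τ_{k-i}) u(k-i)`. -/
theorem lag_l_correlation_d
    {Ω : Type*} [MeasurableSpace Ω] (μ : Measure Ω) [IsProbabilityMeasure μ]
    (τbar : ℕ) (hτbar : 1 ≤ τbar) (α p : ℕ → ℝ)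
    (hp01 : ∀ i ≤ τbar, p i ∈ Set.Icc (0 : ℝ) 1)
    (hpsum : ∑ i ∈ Finset.range (τbar + 1), p i = 1)
    (k : ℤ) (l : ℕ) (hl : 1 ≤ l) (hlτ : l ≤ τbar)
    (T : ℤ → Ω → ℕ) (U : ℤ → Ω → ℝ)
    (hTmeas : ∀ n ∈ Set.Icc (k - (τbar : ℤ)) (k + (l : ℤ)), Measurable (T n))
    (hTrange : ∀ n ∈ Set.Icc (k - (τbar : ℤ)) (k + (l : ℤ)), ∀ x, T n x ≤ τbar)
    (hTpmf : ∀ n ∈ Set.Icc (k - (τbar : ℤ)) (k + (l : ℤ)), ∀ i ≤ τbar,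
      μ {x | T n x = i} = ENNReal.ofReal (p i))
    (hUmeas : ∀ n ∈ Set.Icc (k - (τbar : ℤ)) (k + (l : ℤ)), Measurable (U n))
    (hU : ∀ n ∈ Set.Icc (k - (τbar : ℤ)) (k + (l : ℤ)), MemLp (U n) 2 μ)
    (hind : ∀ n ∈ Set.Icc (k - (τbar : ℤ)) (k + (l : ℤ)),
      Indep (MeasurableSpace.comap (T n) ⊤)
        ((⨆ n' ∈ {m : ℤ | m ∈ Set.Icc (k - (τbar : ℤ)) (k + (l : ℤ)) ∧ m < n},
            MeasurableSpace.comap (T n') ⊤) ⊔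
          (⨆ n' ∈ {m : ℤ | m ∈ Set.Icc (k - (τbar : ℤ)) (k + (l : ℤ)) ∧ m ≤ n},
            MeasurableSpace.comap (U n') inferInstance)) μ) :
    ∫ x, (∑ i ∈ Finset.range (τbar + 1),
            α i * ((if T (k - (i : ℤ)) x = i then (1 : ℝ) else 0) - p i) * U (k - (i : ℤ)) x) *
          (∑ j ∈ Finset.range (τbar + 1),
            α j * ((if T (k + (l : ℤ) - (j : ℤ)) x = j then (1 : ℝ) else 0) - p j) *
              U (k + (l : ℤ) - (j : ℤ)) x) ∂μ =
      -∑ i ∈ Finset.range (τbar - l + 1),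
          α i * α (i + l) * p i * p (i + l) * ∫ x, (U (k - (i : ℤ)) x) ^ 2 ∂μ := by
  classical
  set I : Set ℤ := Set.Icc (k - (τbar : ℤ)) (k + (l : ℤ)) with hIdef
  set M : ℤ → MeasurableSpace Ω := fun n =>
    (⨆ n' ∈ {m : ℤ | m ∈ I ∧ m < n}, MeasurableSpace.comap (T n') ⊤) ⊔
      (⨆ n' ∈ {m : ℤ | m ∈ I ∧ m ≤ n}, MeasurableSpace.comap (U n') inferInstance) with hMdef
  have hind' : ∀ n ∈ I, Indep (MeasurableSpace.comap (T n) ⊤) (M n) μ := fun n hn => hind n hn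
  have hmemL : ∀ i : ℕ, i ≤ τbar → (k - (i : ℤ)) ∈ I := by
    intro i hi; simp only [hIdef, Set.mem_Icc]; omega
  have hmemR : ∀ j : ℕ, j ≤ τbar → (k + (l : ℤ) - (j : ℤ)) ∈ I := by
    intro j hj; simp only [hIdef, Set.mem_Icc]; omega
  -- measurability with respect to M n
  have hTM : ∀ (n n' : ℤ), n' ∈ I → n' < n → Measurable[M n] (T n') := by
    intro n n' h1 h2
    refine measurable_iff_comap_le.mpr ?_
    refine le_trans (MeasurableSpace.comap_mono le_top) (le_trans ?_ le_sup_left)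
    exact le_biSup (fun n' => MeasurableSpace.comap (T n') ⊤)
      (show n' ∈ {m : ℤ | m ∈ I ∧ m < n} from ⟨h1, h2⟩)
  have hUM : ∀ (n n' : ℤ), n' ∈ I → n' ≤ n → Measurable[M n] (U n') := by
    intro n n' h1 h2
    refine measurable_iff_comap_le.mpr ?_
    refine le_trans (le_refl _) (le_trans ?_ le_sup_right)
    exact le_biSup (fun n' => MeasurableSpace.comap (U n') inferInstance)
      (show n' ∈ {m : ℤ | m ∈ I ∧ m ≤ n} from ⟨h1, h2⟩)
  -- square-integrability of each summand
  have hF2 : ∀ i : ℕ, i ≤ τbar → ∀ n, n ∈ I →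
      MemLp (fun x => α i * ((if T n x = i then (1:ℝ) else 0) - p i) * U n x) 2 μ := by
    intro i hi n hn
    have hφ : MemLp (fun x => α i * ((if T n x = i then (1:ℝ) else 0) - p i)) ⊤ μ := by
      refine memLp_top_of_bound (aux_omega_meas (hTmeas n hn) i (α i) (p i)).aestronglyMeasurable
        (|α i| * (1 + |p i|)) (Filter.Eventually.of_forall fun x => ?_)
      rw [Real.norm_eq_abs, abs_mul]
      refine mul_le_mul_of_nonneg_left ?_ (abs_nonneg _)
      refine (abs_sub _ _).trans ?_
      have : |if T n x = i then (1:ℝ) else 0| ≤ 1 := by split_ifs <;> simp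
      linarith
    exact (hU n hn).smul hφ
  have hInt : ∀ (i j : ℕ), i ≤ τbar → j ≤ τbar → ∀ (n n' : ℤ), n ∈ I → n' ∈ I →
      Integrable (fun x => (α i * ((if T n x = i then (1:ℝ) else 0) - p i) * U n x) *
        (α j * ((if T n' x = j then (1:ℝ) else 0) - p j) * U n' x)) μ := by
    intro i j hi hj n n' hn hn'
    have h12 : (1:ENNReal)/1 = 1/2 + 1/2 := by rw [ENNReal.add_halves]; norm_num
    exact memLp_one_iff_integrable.mp (((hF2 j hj n' hn').smul (hF2 i hi n hn)))
  -- the key per-pair computation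
  have key : ∀ i ∈ Finset.range (τbar + 1), ∀ j ∈ Finset.range (τbar + 1),
      ∫ x, (α i * ((if T (k - (i : ℤ)) x = i then (1 : ℝ) else 0) - p i) * U (k - (i : ℤ)) x) *
        (α j * ((if T (k + (l : ℤ) - (j : ℤ)) x = j then (1 : ℝ) else 0) - p j) *
          U (k + (l : ℤ) - (j : ℤ)) x) ∂μ =
      if j = i + l then -(α i * α j * p i * p j * ∫ x, (U (k - (i : ℤ)) x) ^ 2 ∂μ) else 0 := by
    intro i hi j hj
    rw [Finset.mem_range] at hi hj
    replace hi : i ≤ τbar := by omega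
    replace hj : j ≤ τbar := by omega
    have hpi := (hp01 i hi).1
    have hpj := (hp01 j hj).1
    by_cases hij : j = i + l
    · subst hij
      rw [if_pos rfl]
      have hn : k + (l : ℤ) - ((i + l : ℕ) : ℤ) = k - (i : ℤ) := by push_cast; ring
      rw [hn]
      have hnI : (k - (i : ℤ)) ∈ I := hmemL i hi
      exact aux_diag μ (T (k - (i:ℤ))) (U (k - (i:ℤ))) i (i + l) (α i) (α (i+l)) (p i) (p (i+l))
        (by omega) hpi hpj (hTmeas _ hnI) (hTpmf _ hnI i hi) (hTpmf _ hnI (i+l) hj)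
        (hind' _ hnI) (hUM _ _ hnI le_rfl) (hUmeas _ hnI)
    · rw [if_neg hij]
      by_cases hA : j < i + l
      · -- later time is k + l - j
        have hnI : (k + (l:ℤ) - (j:ℤ)) ∈ I := hmemR j hj
        have hmI : (k - (i:ℤ)) ∈ I := hmemL i hi
        have hlt : (k - (i:ℤ)) < k + (l:ℤ) - (j:ℤ) := by omega
        calc ∫ x, (α i * ((if T (k - (i : ℤ)) x = i then (1 : ℝ) else 0) - p i) * U (k - (i : ℤ)) x) *
              (α j * ((if T (k + (l : ℤ) - (j : ℤ)) x = j then (1 : ℝ) else 0) - p j) *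
                U (k + (l : ℤ) - (j : ℤ)) x) ∂μ
            = ∫ x, α j * ((if T (k + (l : ℤ) - (j : ℤ)) x = j then (1 : ℝ) else 0) - p j) *
                ((α i * ((if T (k - (i : ℤ)) x = i then (1 : ℝ) else 0) - p i) * U (k - (i : ℤ)) x) *
                  U (k + (l : ℤ) - (j : ℤ)) x) ∂μ :=
              integral_congr_ae (Filter.Eventually.of_forall fun x => by ring)
          _ = 0 := by
              refine aux_cross μ (T (k + (l:ℤ) - (j:ℤ)))
                (fun x => (α i * ((if T (k - (i : ℤ)) x = i then (1 : ℝ) else 0) - p i) *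
                  U (k - (i : ℤ)) x) * U (k + (l : ℤ) - (j : ℤ)) x) j (α j) (p j) hpj
                (hTmeas _ hnI) (hTpmf _ hnI j hj) (hind' _ hnI) ?_ ?_
              · exact ((aux_omega_meas (hTM _ _ hmI hlt) i (α i) (p i)).mul
                  (hUM _ _ hmI hlt.le)).mul (hUM _ _ hnI le_rfl)
              · exact (((aux_omega_meas (hTmeas _ hmI) i (α i) (p i)).mul
                  (hUmeas _ hmI)).mul (hUmeas _ hnI)).aestronglyMeasurable
      · -- later time is k - i
        have hB : i + l < j := by omega
        have hnI : (k - (i:ℤ)) ∈ I := hmemL i hi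
        have hmI : (k + (l:ℤ) - (j:ℤ)) ∈ I := hmemR j hj
        have hlt : (k + (l:ℤ) - (j:ℤ)) < k - (i:ℤ) := by omega
        calc ∫ x, (α i * ((if T (k - (i : ℤ)) x = i then (1 : ℝ) else 0) - p i) * U (k - (i : ℤ)) x) *
              (α j * ((if T (k + (l : ℤ) - (j : ℤ)) x = j then (1 : ℝ) else 0) - p j) *
                U (k + (l : ℤ) - (j : ℤ)) x) ∂μ
            = ∫ x, α i * ((if T (k - (i : ℤ)) x = i then (1 : ℝ) else 0) - p i) *
                ((α j * ((if T (k + (l : ℤ) - (j : ℤ)) x = j then (1 : ℝ) else 0) - p j) *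
                  U (k + (l : ℤ) - (j : ℤ)) x) * U (k - (i : ℤ)) x) ∂μ :=
              integral_congr_ae (Filter.Eventually.of_forall fun x => by ring)
          _ = 0 := by
              refine aux_cross μ (T (k - (i:ℤ)))
                (fun x => (α j * ((if T (k + (l : ℤ) - (j : ℤ)) x = j then (1 : ℝ) else 0) - p j) *
                  U (k + (l : ℤ) - (j : ℤ)) x) * U (k - (i : ℤ)) x) i (α i) (p i) hpi
                (hTmeas _ hnI) (hTpmf _ hnI i hi) (hind' _ hnI) ?_ ?_
              · exact ((aux_omega_meas (hTM _ _ hmI hlt) j (α j) (p j)).mul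
                  (hUM _ _ hmI hlt.le)).mul (hUM _ _ hnI le_rfl)
              · exact (((aux_omega_meas (hTmeas _ hmI) j (α j) (p j)).mul
                  (hUmeas _ hmI)).mul (hUmeas _ hnI)).aestronglyMeasurable
  -- put everything together
  have hrw : (fun x => (∑ i ∈ Finset.range (τbar + 1),
        α i * ((if T (k - (i : ℤ)) x = i then (1 : ℝ) else 0) - p i) * U (k - (i : ℤ)) x) *
      (∑ j ∈ Finset.range (τbar + 1),
        α j * ((if T (k + (l : ℤ) - (j : ℤ)) x = j then (1 : ℝ) else 0) - p j) *
          U (k + (l : ℤ) - (j : ℤ)) x)) =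
      fun x => ∑ i ∈ Finset.range (τbar + 1), ∑ j ∈ Finset.range (τbar + 1),
        (α i * ((if T (k - (i : ℤ)) x = i then (1 : ℝ) else 0) - p i) * U (k - (i : ℤ)) x) *
        (α j * ((if T (k + (l : ℤ) - (j : ℤ)) x = j then (1 : ℝ) else 0) - p j) *
          U (k + (l : ℤ) - (j : ℤ)) x) :=
    funext fun x => Finset.sum_mul_sum _ _ _ _
  rw [hrw, integral_finset_sum _ (fun i hi => integrable_finset_sum _ fun j hj =>
    hInt i j (by simpa using Nat.lt_succ_iff.mp (Finset.mem_range.mp hi))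
      (by simpa using Nat.lt_succ_iff.mp (Finset.mem_range.mp hj)) _ _
      (hmemL i (Nat.lt_succ_iff.mp (Finset.mem_range.mp hi)))
      (hmemR j (Nat.lt_succ_iff.mp (Finset.mem_range.mp hj))))]
  rw [Finset.sum_congr rfl fun i hi => integral_finset_sum _ fun j hj =>
    hInt i j (Nat.lt_succ_iff.mp (Finset.mem_range.mp hi))
      (Nat.lt_succ_iff.mp (Finset.mem_range.mp hj)) _ _
      (hmemL i (Nat.lt_succ_iff.mp (Finset.mem_range.mp hi)))
      (hmemR j (Nat.lt_succ_iff.mp (Finset.mem_range.mp hj)))]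
  rw [Finset.sum_congr rfl fun i hi => Finset.sum_congr rfl fun j hj => key i hi j hj]
  rw [Finset.sum_congr rfl fun i _ => Finset.sum_ite_eq' (Finset.range (τbar + 1)) (i + l)
    (fun j => -(α i * α j * p i * p j * ∫ x, (U (k - (i : ℤ)) x) ^ 2 ∂μ))]
  rw [← Finset.sum_subset (Finset.range_subset_range.mpr (show τbar - l + 1 ≤ τbar + 1 by omega))
    (fun i _ hni => if_neg (by
      rw [Finset.mem_range] at *
      omega))]
  rw [Finset.sum_congr rfl fun i hi => if_pos (Finset.mem_range.mpr (by
    rw [Finset.mem_range] at hi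
    omega))]
  rw [← Finset.sum_neg_distrib]
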